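/- Let K be a real quadratic field with fundamental unit η, and σ the nontrivial embedding. For every nonzero algebraic integer α in K, there exists an integer m such that the Weil height satisfies h(η^m·α) ≤ (1/2)·log|α·σ(α)| + (1/2)·log η. -/

import Mathlib

/-!
The real quadratic field `K` has exactly two infinite places, `|φ ·|` and `|σ ·|`, both real, so
`h(x) = (log⁺ |φ x| + log⁺ |σ x|) / 2` and `|φ x| |σ x| = |N x|`. Multiplying `α` by `η ^ m`
shifts the pair `(log |φ α|, log |σ α|)` by `(m ε, -m ε)` with `ε = log η`, keeping the sum
`log |N α| ≥ 0`. Choosing `m` with `0 ≤ log |φ (η ^ m α)| < ε` gives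
`h(η ^ m α) ≤ (log |N α| + ε) / 2`.
-/

open NumberField

/-- The absolute logarithmic Weil height of an algebraic integer `α` of a
number field `K`: since all finite places of an algebraic integer contribute
nothing, it equals `(1/[K:ℚ]) ∑_{v infinite} mult(v) * max 0 (log v(α))`. -/
noncomputable def intWeilHeight (K : Type*) [Field K] [NumberField K]
    (α : 𝓞 K) : ℝ :=
  (Module.finrank ℚ K : ℝ)⁻¹ *
    ∑ v : InfinitePlace K, (v.mult : ℝ) * max 0 (Real.log (v (α : K)))

theorem Real.exists_int_max_zero_add_max_zero_le {a b ε : ℝ} (hab : 0 ≤ a + b) (hε : 0 < ε) :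
    ∃ m : ℤ, max 0 (a + m * ε) + max 0 (b - m * ε) ≤ a + b + ε := by
  -- `m = ⌈-a / ε⌉` puts `a + m ε` in `[0, ε)`.
  refine ⟨⌈-a / ε⌉, ?_⟩
  have hlow : -a / ε ≤ ⌈-a / ε⌉ := Int.le_ceil _
  have hup : (⌈-a / ε⌉ : ℝ) - 1 < -a / ε := by linarith [Int.ceil_lt_add_one (-a / ε)]
  rw [div_le_iff₀ hε] at hlow
  rw [lt_div_iff₀ hε] at hup
  rw [max_eq_right (by linarith)]
  rcases le_total (b - ⌈-a / ε⌉ * ε) 0 with h | h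
  · rw [max_eq_left h]
    linarith
  · rw [max_eq_right h]
    linarith

theorem Real.log_abs_map_zpow_mul {K : Type*} [Field K] (f : K →+* ℝ) {u x : K} (hu : u ≠ 0)
    (hx : x ≠ 0) (m : ℤ) :
    Real.log |f (u ^ m * x)| = Real.log |f x| + m * Real.log |f u| := by
  have hfu : |f u| ≠ 0 := by simpa using hu
  have hfx : |f x| ≠ 0 := by simpa using hx
  rw [map_mul, map_zpow₀, abs_mul, abs_zpow, Real.log_mul (zpow_ne_zero m hfu) hfx,
    Real.log_zpow, add_comm]

namespace NumberField

variable {K : Type*} [Field K]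

lemma ComplexEmbedding.isReal_ofRealHom_comp (φ : K →+* ℝ) :
    ComplexEmbedding.IsReal (Complex.ofRealHom.comp φ) := by
  ext x
  simp

namespace InfinitePlace

noncomputable def ofRealEmbedding (φ : K →+* ℝ) : InfinitePlace K :=
  mk (Complex.ofRealHom.comp φ)

theorem ofRealEmbedding_apply (φ : K →+* ℝ) (x : K) : ofRealEmbedding φ x = |φ x| := by
  simp [ofRealEmbedding, apply]

theorem mult_ofRealEmbedding (φ : K →+* ℝ) : (ofRealEmbedding φ).mult = 1 :=
  (isReal_mk_iff.mpr (ComplexEmbedding.isReal_ofRealHom_comp φ)).mult_eq_one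

theorem ofRealEmbedding_injective : Function.Injective (ofRealEmbedding (K := K)) := by
  intro φ σ h
  have hcomp : Complex.ofRealHom.comp φ = Complex.ofRealHom.comp σ := by
    rcases mk_eq_iff.mp h with h | h
    · exact h
    · rwa [ComplexEmbedding.isReal_iff.mp (ComplexEmbedding.isReal_ofRealHom_comp φ)] at h
  ext x
  simpa using RingHom.congr_fun hcomp x

variable [NumberField K]

open Classical in
theorem univ_eq_pair_of_finrank_eq_two (h2 : Module.finrank ℚ K = 2) {φ σ : K →+* ℝ}
    (hφσ : φ ≠ σ) :
    (Finset.univ : Finset (InfinitePlace K)) = {ofRealEmbedding φ, ofRealEmbedding σ} := by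
  have hcard : Fintype.card (InfinitePlace K) ≤ 2 := by
    simpa [← h2, ← sum_mult_eq] using
      Finset.card_nsmul_le_sum Finset.univ (fun w : InfinitePlace K ↦ w.mult) 1
        (fun _ _ ↦ mult_pos)
  refine (Finset.eq_univ_of_card _ (le_antisymm (Finset.card_le_univ _) ?_)).symm
  rwa [Finset.card_pair (ofRealEmbedding_injective.ne hφσ)]

end InfinitePlace

open InfinitePlace

variable [NumberField K]

theorem abs_mul_abs_eq_abs_norm_of_finrank_eq_two (h2 : Module.finrank ℚ K = 2)
    {φ σ : K →+* ℝ} (hφσ : φ ≠ σ) (x : K) : |φ x| * |σ x| = |(Algebra.norm ℚ x : ℝ)| := by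
  classical
  have h := prod_eq_abs_norm x
  rw [univ_eq_pair_of_finrank_eq_two h2 hφσ,
    Finset.prod_pair (ofRealEmbedding_injective.ne hφσ)] at h
  simpa [mult_ofRealEmbedding, ofRealEmbedding_apply] using h

theorem one_le_abs_mul_abs_of_finrank_eq_two (h2 : Module.finrank ℚ K = 2) {φ σ : K →+* ℝ}
    (hφσ : φ ≠ σ) {α : 𝓞 K} (hα : α ≠ 0) : 1 ≤ |φ α| * |σ α| := by
  rw [abs_mul_abs_eq_abs_norm_of_finrank_eq_two h2 hφσ, ← Algebra.coe_norm_int]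
  exact_mod_cast Int.one_le_abs (Algebra.norm_ne_zero_iff.mpr hα)

theorem Units.abs_mul_abs_eq_one_of_finrank_eq_two (h2 : Module.finrank ℚ K = 2)
    {φ σ : K →+* ℝ} (hφσ : φ ≠ σ) (u : (𝓞 K)ˣ) : |φ u| * |σ u| = 1 := by
  rw [abs_mul_abs_eq_abs_norm_of_finrank_eq_two h2 hφσ]
  exact_mod_cast Units.norm K u

end NumberField

open InfinitePlace in
theorem intWeilHeight_eq_of_finrank_eq_two {K : Type*} [Field K] [NumberField K]
    (h2 : Module.finrank ℚ K = 2) {φ σ : K →+* ℝ} (hφσ : φ ≠ σ) (x : 𝓞 K) :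
    intWeilHeight K x = 2⁻¹ * (max 0 (Real.log |φ x|) + max 0 (Real.log |σ x|)) := by
  classical
  rw [intWeilHeight, h2, univ_eq_pair_of_finrank_eq_two h2 hφσ,
    Finset.sum_pair (ofRealEmbedding_injective.ne hφσ)]
  simp [mult_ofRealEmbedding, ofRealEmbedding_apply]

theorem stmt_8_general (K : Type*) [Field K] [NumberField K]
    (h2 : Module.finrank ℚ K = 2)
    (φ σ : K →+* ℝ) (hφσ : φ ≠ σ)
    (η : (𝓞 K)ˣ) (hη : 1 < φ (η : 𝓞 K))
    (α : 𝓞 K) (hα : α ≠ 0) :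
    ∃ m : ℤ,
      intWeilHeight K (((η ^ m : (𝓞 K)ˣ) : 𝓞 K) * α) ≤
        (1 / 2) * Real.log |φ (α : K) * σ (α : K)| +
          (1 / 2) * Real.log (φ (η : 𝓞 K)) := by
  have hηK : ((η : 𝓞 K) : K) ≠ 0 := Units.coe_ne_zero η
  have hαK : (α : K) ≠ 0 := RingOfIntegers.coe_ne_zero_iff.mpr hα
  have hφα : φ (α : K) ≠ 0 := by simp [hαK]
  have hσα : σ (α : K) ≠ 0 := by simp [hαK]
  have hση : Real.log |σ (η : 𝓞 K)| = -Real.log (φ (η : 𝓞 K)) := by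
    have h := congrArg Real.log (Units.abs_mul_abs_eq_one_of_finrank_eq_two h2 hφσ η)
    rw [Real.log_mul (by simp [hηK]) (by simp [hηK]), Real.log_one,
      abs_of_pos (one_pos.trans hη)] at h
    linarith
  have hnorm : 0 ≤ Real.log |φ (α : K)| + Real.log |σ (α : K)| := by
    rw [← Real.log_mul (abs_ne_zero.mpr hφα) (abs_ne_zero.mpr hσα)]
    exact Real.log_nonneg (one_le_abs_mul_abs_of_finrank_eq_two h2 hφσ hα)
  obtain ⟨m, hm⟩ := Real.exists_int_max_zero_add_max_zero_le hnorm (Real.log_pos hη)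
  refine ⟨m, ?_⟩
  have hcoe : ((((η ^ m : (𝓞 K)ˣ) : 𝓞 K) * α : 𝓞 K) : K) = ((η : 𝓞 K) : K) ^ m * α := by
    rw [← Units.coe_zpow]
    rfl
  rw [intWeilHeight_eq_of_finrank_eq_two h2 hφσ, hcoe,
    Real.log_abs_map_zpow_mul φ hηK hαK, Real.log_abs_map_zpow_mul σ hηK hαK, hση,
    abs_mul, Real.log_mul (abs_ne_zero.mpr hφα) (abs_ne_zero.mpr hσα),
    abs_of_pos (one_pos.trans hη), mul_neg, ← sub_eq_add_neg]
  linarith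

theorem stmt_8 (K : Type*) [Field K] [NumberField K]
    (h2 : Module.finrank ℚ K = 2)
    (φ σ : K →+* ℝ) (hφσ : φ ≠ σ)
    (η : (𝓞 K)ˣ) (hη : 1 < φ (η : 𝓞 K))
    (hfund : ∀ u : (𝓞 K)ˣ, 1 < φ (u : 𝓞 K) → φ (η : 𝓞 K) ≤ φ (u : 𝓞 K))
    (α : 𝓞 K) (hα : α ≠ 0) :
    ∃ m : ℤ,
      intWeilHeight K (((η ^ m : (𝓞 K)ˣ) : 𝓞 K) * α) ≤
        (1 / 2) * Real.log |φ (α : K) * σ (α : K)| +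
          (1 / 2) * Real.log (φ (η : 𝓞 K)) :=
  stmt_8_general K h2 φ σ hφσ η hη α hα
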